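/- Let x(t) = r(t)s(t) be a positive h-energy solution of the anisotropic Kepler problem defined for all t ∈ [t₀, ∞). Then there exists s⁺ ∈ S^{d-1} such that s(t) → s⁺ as t → ∞; consequently x(t)/t → √(2h) s⁺ as t → ∞. -/

import Mathlib

/-!
By Euler's identity `⟪∇U y, y⟫ = -α U y` and conservation of energy,
`d/dt ⟪x, ẋ⟫ = 2h + (2 - α) U(x) ≥ 2h`, so `‖x‖²` grows at least quadratically and `‖x t‖ ≥ c t`
for large `t`. Homogeneity bounds `‖∇U(x)‖` by `C ‖x‖^(-α-1) ≤ C' t^(-α-1)`, which is integrable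
at infinity because `α > 0`; hence the velocity `ẋ` converges to some `v`, and `‖v‖² = 2h` because
`U(x t) → 0`. Then `x t / t → v`, and the direction `x / ‖x‖` tends to `v / ‖v‖`.
-/

open Real Set Filter Topology MeasureTheory
open scoped RealInnerProductSpace Gradient

section Homogeneous

variable {E F : Type*} [NormedAddCommGroup E] [NormedSpace ℝ E]
  [NormedAddCommGroup F] [NormedSpace ℝ F] {U : E → ℝ} {β c : ℝ} {y : E}

lemma apply_smul_of_homogeneous (hU : ∀ y : E, y ≠ 0 → U y = ‖y‖ ^ β * U (‖y‖⁻¹ • y))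
    (hy : y ≠ 0) (hc : 0 < c) : U (c • y) = c ^ β * U y := by
  have hny : 0 < ‖y‖ := norm_pos_iff.2 hy
  have hn : ‖c • y‖ = c * ‖y‖ := by rw [norm_smul, Real.norm_of_nonneg hc.le]
  have hu : (c * ‖y‖)⁻¹ • c • y = ‖y‖⁻¹ • y := by
    rw [smul_smul, mul_inv, mul_right_comm, inv_mul_cancel₀ hc.ne', one_mul]
  rw [hU (c • y) (smul_ne_zero hc.ne' hy), hn, hu, Real.mul_rpow hc.le hny.le, mul_assoc,
    ← hU y hy]

lemma pos_of_homogeneous (hU : ∀ y : E, y ≠ 0 → U y = ‖y‖ ^ β * U (‖y‖⁻¹ • y))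
    (hpos : ∀ y : E, ‖y‖ = 1 → 0 < U y) (hy : y ≠ 0) : 0 < U y := by
  have hny : 0 < ‖y‖ := norm_pos_iff.2 hy
  rw [hU y hy]
  refine mul_pos (Real.rpow_pos_of_pos hny β) (hpos _ ?_)
  rw [norm_smul, norm_inv, norm_norm, inv_mul_cancel₀ hny.ne']

lemma exists_norm_le_mul_rpow_of_homogeneous [ProperSpace E] {f : E → F}
    (hf : ContinuousOn f {y | y ≠ 0})
    (hhom : ∀ y : E, y ≠ 0 → ∀ c : ℝ, 0 < c → f (c • y) = c ^ β • f y) :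
    ∃ C, 0 ≤ C ∧ ∀ y : E, y ≠ 0 → ‖f y‖ ≤ C * ‖y‖ ^ β := by
  have hsphere : Metric.sphere (0 : E) 1 ⊆ {y | y ≠ 0} := fun y hy h0 => by
    simp [h0] at hy
  obtain ⟨C, hC⟩ := (isCompact_sphere (0 : E) 1).exists_bound_of_continuousOn (hf.mono hsphere)
  refine ⟨max C 0, le_max_right C 0, fun y hy => ?_⟩
  have hny : 0 < ‖y‖ := norm_pos_iff.2 hy
  have hu : ‖y‖⁻¹ • y ∈ Metric.sphere (0 : E) 1 := by
    rw [mem_sphere_zero_iff_norm, norm_smul, norm_inv, norm_norm, inv_mul_cancel₀ hny.ne']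
  calc ‖f y‖ = ‖y‖ ^ β * ‖f (‖y‖⁻¹ • y)‖ := by
        conv_lhs => rw [← smul_inv_smul₀ hny.ne' y]
        rw [hhom _ (ne_zero_of_mem_unit_sphere ⟨_, hu⟩) _ hny,
          norm_smul, Real.norm_of_nonneg (Real.rpow_nonneg hny.le β)]
    _ ≤ max C 0 * ‖y‖ ^ β := by
        rw [mul_comm]
        exact mul_le_mul_of_nonneg_right ((hC _ hu).trans (le_max_left C 0))
          (Real.rpow_nonneg hny.le β)

end Homogeneous

section Gradient

variable {E : Type*} [NormedAddCommGroup E] [InnerProductSpace ℝ E] [CompleteSpace E]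
  {U : E → ℝ} {β c : ℝ} {y : E}

lemma inner_gradient_self_of_homogeneous
    (hU : ∀ y : E, y ≠ 0 → ∀ c : ℝ, 0 < c → U (c • y) = c ^ β * U y) (hy : y ≠ 0)
    (hd : DifferentiableAt ℝ U y) : ⟪∇ U y, y⟫ = β * U y := by
  have hline : HasDerivAt (fun c : ℝ => U (c • y)) (fderiv ℝ U y y) 1 := by
    have hsmul : HasDerivAt (fun c : ℝ => c • y) y 1 := by
      simpa using (hasDerivAt_id (1 : ℝ)).smul_const y
    have hU1 : HasFDerivAt U (fderiv ℝ U y) ((1 : ℝ) • y) := by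
      rw [one_smul]; exact hd.hasFDerivAt
    exact hU1.comp_hasDerivAt 1 hsmul
  have hpow : HasDerivAt (fun c : ℝ => c ^ β * U y) (β * U y) 1 := by
    simpa using (Real.hasDerivAt_rpow_const (x := 1) (p := β) (Or.inl one_ne_zero)).mul_const (U y)
  have heq : (fun c : ℝ => U (c • y)) =ᶠ[𝓝 1] fun c => c ^ β * U y := by
    filter_upwards [eventually_gt_nhds one_pos] with c hc using hU y hy c hc
  rw [← InnerProductSpace.toDual_apply_apply, toDual_gradient]
  exact hline.unique (hpow.congr_of_eventuallyEq heq)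

lemma gradient_smul_of_homogeneous
    (hU : ∀ y : E, y ≠ 0 → ∀ c : ℝ, 0 < c → U (c • y) = c ^ β * U y) (hy : y ≠ 0)
    (hc : 0 < c) (hd : DifferentiableAt ℝ U y) : ∇ U (c • y) = c ^ (β - 1) • ∇ U y := by
  -- near `c • y` the potential is `w ↦ c ^ β * U (c⁻¹ • w)`
  have heq : (fun w => c ^ β * U (c⁻¹ • w)) =ᶠ[𝓝 (c • y)] U := by
    filter_upwards [isOpen_ne.mem_nhds (smul_ne_zero hc.ne' hy)] with w hw
    rw [← hU _ (smul_ne_zero (inv_ne_zero hc.ne') hw) c hc, smul_inv_smul₀ hc.ne']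
  have hU' : HasFDerivAt U (fderiv ℝ U y) (c⁻¹ • c • y) := by
    rw [inv_smul_smul₀ hc.ne']; exact hd.hasFDerivAt
  have hscaled : HasFDerivAt U (c ^ β • (fderiv ℝ U y).comp (c⁻¹ • ContinuousLinearMap.id ℝ E))
      (c • y) :=
    ((hU'.comp (c • y) ((hasFDerivAt_id _).const_smul c⁻¹)).const_mul (c ^ β)).congr_of_eventuallyEq
      heq.symm
  have hdual : InnerProductSpace.toDual ℝ E (c ^ (β - 1) • ∇ U y) =
      c ^ β • (fderiv ℝ U y).comp (c⁻¹ • ContinuousLinearMap.id ℝ E) := by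
    ext v
    simp [Real.rpow_sub_one hc.ne']
    ring
  refine HasGradientAt.gradient (hasGradientAt_iff_hasFDerivAt.2 ?_)
  rw [hdual]
  exact hscaled

lemma continuousOn_gradient_of_contDiffOn {U : E → ℝ} {s : Set E} (hs : IsOpen s)
    (hU : ContDiffOn ℝ 1 U s) : ContinuousOn (∇ U) s :=
  (InnerProductSpace.toDual ℝ E).symm.continuous.comp_continuousOn
    (hU.continuousOn_fderiv_of_isOpen hs le_rfl)

end Gradient

lemma sub_le_sub_of_hasDerivAt_le {f g f' g' : ℝ → ℝ} {a b : ℝ}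
    (hf : ∀ t ∈ Ici a, HasDerivAt f (f' t) t) (hg : ∀ t ∈ Ici a, HasDerivAt g (g' t) t)
    (hle : ∀ t ∈ Ioi a, g' t ≤ f' t) (hab : a ≤ b) : g b - g a ≤ f b - f a := by
  have hderiv : ∀ t ∈ Ici a, HasDerivAt (f - g) (f' t - g' t) t := fun t ht =>
    (hf t ht).sub (hg t ht)
  have hmono : MonotoneOn (f - g) (Ici a) := by
    refine monotoneOn_of_hasDerivWithinAt_nonneg (f' := fun t => f' t - g' t) (convex_Ici a)
      (fun t ht => (hderiv t ht).continuousAt.continuousWithinAt) (fun t ht => ?_) fun t ht => ?_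
    · rw [interior_Ici] at ht ⊢
      exact (hderiv t (mem_Ici_of_Ioi ht)).hasDerivWithinAt
    · rw [interior_Ici] at ht
      exact sub_nonneg.2 (hle t ht)
  have := hmono self_mem_Ici (mem_Ici.2 hab) hab
  simp only [Pi.sub_apply] at this
  linarith

section Escape

variable {E : Type*} [NormedAddCommGroup E] [InnerProductSpace ℝ E]

lemma exists_pos_eventually_mul_le_norm_of_le_deriv_inner {x x' : ℝ → E} {p' : ℝ → ℝ}
    {a t₀ : ℝ} (ha : 0 < a)
    (hx : ∀ t ∈ Ici t₀, HasDerivAt x (x' t) t)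
    (hp : ∀ t ∈ Ici t₀, HasDerivAt (fun t => ⟪x t, x' t⟫) (p' t) t)
    (hp' : ∀ t ∈ Ici t₀, a ≤ p' t) : ∃ c > 0, ∀ᶠ t in atTop, c * t ≤ ‖x t‖ := by
  set p := fun t => ⟪x t, x' t⟫
  have hp_lin : ∀ t ∈ Ici t₀, a * t - a * t₀ ≤ p t - p t₀ := fun t ht =>
    sub_le_sub_of_hasDerivAt_le hp (fun t _ => (hasDerivAt_id t).const_mul a)
      (fun t ht => by simpa using hp' t (mem_Ici_of_Ioi ht)) ht
  obtain ⟨T, hT⟩ : ∃ T, ∀ t ≥ T, 0 ≤ t ∧ t₀ ≤ t ∧ a / 2 * t ≤ p t := by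
    refine eventually_atTop.1 ?_
    filter_upwards [eventually_ge_atTop 0, eventually_ge_atTop t₀,
      eventually_ge_atTop (2 * (t₀ - p t₀ / a))] with t ht0 ht₀ hlarge
    have hscale : a * (2 * (t₀ - p t₀ / a)) = 2 * (a * t₀ - p t₀) := by field_simp
    exact ⟨ht0, ht₀, by nlinarith [hp_lin t ht₀]⟩
  have hT0 : 0 ≤ T := (hT T le_rfl).1
  have hsq : ∀ t ≥ T, a / 2 * t ^ 2 - a / 2 * T ^ 2 ≤ ‖x t‖ ^ 2 - ‖x T‖ ^ 2 := fun t ht =>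
    sub_le_sub_of_hasDerivAt_le (fun t ht => (hx t (hT t ht).2.1).norm_sq)
      (fun t _ => (hasDerivAt_pow 2 t).const_mul (a / 2))
      (fun t ht => by nlinarith [(hT t (mem_Ioi.1 ht).le).2.2]) ht
  refine ⟨√a / 2, by positivity, ?_⟩
  filter_upwards [eventually_ge_atTop (2 * T)] with t ht
  have htT : T ≤ t := by linarith
  have hsq_le : (√a / 2 * t) ^ 2 ≤ ‖x t‖ ^ 2 := by
    have hTt : 4 * T ^ 2 ≤ t ^ 2 := by nlinarith
    rw [mul_pow, div_pow, Real.sq_sqrt ha.le]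
    nlinarith [hsq t htT, sq_nonneg ‖x T‖]
  have ht0 : 0 ≤ t := by linarith
  exact (pow_le_pow_iff_left₀ (by positivity) (norm_nonneg _) two_ne_zero).1 hsq_le

end Escape

lemma tendsto_cobounded_zero_of_norm_le_mul_rpow {E F : Type*} [NormedAddCommGroup E]
    [NormedAddCommGroup F] {f : E → F} {C β : ℝ} (hβ : β < 0)
    (hf : ∀ y : E, y ≠ 0 → ‖f y‖ ≤ C * ‖y‖ ^ β) :
    Tendsto f (Bornology.cobounded E) (𝓝 0) := by
  have hdecay : Tendsto (fun y : E => C * ‖y‖ ^ β) (Bornology.cobounded E) (𝓝 0) := by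
    simpa using ((tendsto_rpow_neg_atTop (neg_pos.2 hβ)).comp
      tendsto_norm_cobounded_atTop).const_mul C
  refine squeeze_zero_norm' ?_ hdecay
  filter_upwards [(tendsto_norm_cobounded_atTop (E := E)).eventually_gt_atTop 0] with y hy
  exact hf y (norm_pos_iff.1 hy)

section Limits

variable {E : Type*} [NormedAddCommGroup E] [NormedSpace ℝ E]

lemma exists_tendsto_of_norm_hasDerivAt_le_rpow [CompleteSpace E] {f f' : ℝ → E}
    {t₀ K γ : ℝ} (hγ : γ < -1) (hf : ∀ t ∈ Ici t₀, HasDerivAt f (f' t) t)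
    (hf' : ContinuousOn f' (Ici t₀)) (hbound : ∀ᶠ t in atTop, ‖f' t‖ ≤ K * t ^ γ) :
    ∃ v, Tendsto f atTop (𝓝 v) := by
  obtain ⟨T, hT⟩ := eventually_atTop.1
    (hbound.and ((eventually_ge_atTop t₀).and (eventually_gt_atTop 0)))
  have hTt₀ : Ioi T ⊆ Ici t₀ := fun t ht => (hT t (mem_Ioi.1 ht).le).2.1
  have hint : IntegrableOn f' (Ioi T) :=
    Integrable.mono' ((integrableOn_Ioi_rpow_of_lt hγ (hT T le_rfl).2.2).const_mul K)
      ((hf'.mono hTt₀).aestronglyMeasurable measurableSet_Ioi)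
      ((ae_restrict_mem measurableSet_Ioi).mono fun t ht => (hT t (mem_Ioi.1 ht).le).1)
  exact ⟨_, tendsto_limUnder_of_hasDerivAt_of_integrableOn_Ioi (fun t ht => hf t (hTt₀ ht)) hint⟩

lemma isLittleO_id_of_tendsto_deriv_zero {g g' : ℝ → E} {t₀ : ℝ}
    (hg : ∀ t ∈ Ici t₀, HasDerivAt g (g' t) t) (hg' : Tendsto g' atTop (𝓝 0)) :
    g =o[atTop] id := by
  refine Asymptotics.isLittleO_iff.2 fun c hc => ?_
  obtain ⟨T, hT⟩ := eventually_atTop.1 (((tendsto_zero_iff_norm_tendsto_zero.1 hg').eventually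
    (ge_mem_nhds (half_pos hc))).and ((eventually_ge_atTop t₀).and (eventually_ge_atTop 0)))
  have hmvt : ∀ t ≥ T, ‖g t - g T‖ ≤ c / 2 * (t - T) := fun t ht => by
    simpa [Real.norm_of_nonneg (sub_nonneg.2 ht)] using
      Convex.norm_image_sub_le_of_norm_hasDerivWithin_le
        (fun τ hτ => (hg τ (hT τ hτ.1).2.1).hasDerivWithinAt) (fun τ hτ => (hT τ hτ.1).1)
        (convex_Icc T t) (left_mem_Icc.2 ht) (right_mem_Icc.2 ht)
  filter_upwards [eventually_ge_atTop T, eventually_ge_atTop (2 * ‖g T‖ / c)] with t hT' hbig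
  have hT0 := (hT T le_rfl).2.2
  have : 2 * ‖g T‖ ≤ c * t := by rwa [div_le_iff₀' hc] at hbig
  rw [id, Real.norm_of_nonneg (hT0.trans hT')]
  linarith [norm_le_norm_add_norm_sub' (g t) (g T), hmvt t hT', mul_nonneg hc.le hT0]

lemma tendsto_inv_smul_of_tendsto_deriv {f f' : ℝ → E} {t₀ : ℝ} {v : E}
    (hf : ∀ t ∈ Ici t₀, HasDerivAt f (f' t) t) (hf' : Tendsto f' atTop (𝓝 v)) :
    Tendsto (fun t => t⁻¹ • f t) atTop (𝓝 v) := by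
  have hdrift : (fun t => f t - t • v) =o[atTop] id :=
    isLittleO_id_of_tendsto_deriv_zero
      (fun t ht => by simpa using (hf t ht).fun_sub ((hasDerivAt_id t).smul_const v))
      (by simpa using hf'.sub_const v)
  rw [tendsto_iff_norm_sub_tendsto_zero]
  refine hdrift.norm_left.tendsto_div_nhds_zero.congr' ?_
  filter_upwards [eventually_gt_atTop 0] with t ht
  have hsplit : t⁻¹ • f t - v = t⁻¹ • (f t - t • v) := by rw [smul_sub, inv_smul_smul₀ ht.ne']
  rw [hsplit, norm_smul, norm_inv, Real.norm_of_nonneg ht.le, id, div_eq_inv_mul]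

lemma tendsto_norm_inv_smul_of_tendsto_inv_smul {x : ℝ → E} {v : E} (hv : v ≠ 0)
    (hx : Tendsto (fun t => t⁻¹ • x t) atTop (𝓝 v)) :
    Tendsto (fun t => ‖x t‖⁻¹ • x t) atTop (𝓝 (‖v‖⁻¹ • v)) := by
  have hcont : ContinuousAt (fun y : E => ‖y‖⁻¹ • y) v :=
    (continuousAt_id.norm.inv₀ (norm_ne_zero_iff.2 hv)).smul continuousAt_id
  refine (hcont.tendsto.comp hx).congr' ?_
  filter_upwards [eventually_gt_atTop 0] with t ht
  simp only [Function.comp_apply, norm_smul, norm_inv, Real.norm_of_nonneg ht.le, mul_inv, inv_inv,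
    smul_smul]
  rw [mul_right_comm, mul_inv_cancel₀ ht.ne', one_mul]

end Limits

section Kepler

variable {E : Type*} [NormedAddCommGroup E] [InnerProductSpace ℝ E] [CompleteSpace E]

structure IsKeplerOrbit (U : E → ℝ) (h t₀ : ℝ) (x x' : ℝ → E) : Prop where
  ne_zero : ∀ t ∈ Ici t₀, x t ≠ 0
  hasDerivAt : ∀ t ∈ Ici t₀, HasDerivAt x (x' t) t
  hasDerivAt_deriv : ∀ t ∈ Ici t₀, HasDerivAt x' (∇ U (x t)) t
  energy : ∀ t ∈ Ici t₀, 1 / 2 * ‖x' t‖ ^ 2 - U (x t) = h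

namespace IsKeplerOrbit

variable {U : E → ℝ} {α h t₀ : ℝ} {x x' : ℝ → E}

lemma hasDerivAt_inner (hx : IsKeplerOrbit U h t₀ x x')
    (hU : ∀ y : E, y ≠ 0 → ∀ c : ℝ, 0 < c → U (c • y) = c ^ (-α) * U y)
    (hU1 : ContDiffOn ℝ 1 U {y | y ≠ 0}) {t : ℝ} (ht : t ∈ Ici t₀) :
    HasDerivAt (fun t => ⟪x t, x' t⟫) (2 * h + (2 - α) * U (x t)) t := by
  have hxt := hx.ne_zero t ht
  have heuler := inner_gradient_self_of_homogeneous hU hxt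
    ((hU1.differentiableOn one_ne_zero).differentiableAt (isOpen_ne.mem_nhds hxt))
  refine ((hx.hasDerivAt t ht).inner ℝ (hx.hasDerivAt_deriv t ht)).congr_deriv ?_
  rw [real_inner_comm (∇ U _), heuler, real_inner_self_eq_norm_sq]
  linarith [hx.energy t ht]

lemma exists_pos_eventually_mul_le_norm (hx : IsKeplerOrbit U h t₀ x x') (hα : α ≤ 2)
    (hh : 0 < h) (hU : ∀ y : E, y ≠ 0 → ∀ c : ℝ, 0 < c → U (c • y) = c ^ (-α) * U y)
    (hU1 : ContDiffOn ℝ 1 U {y | y ≠ 0}) (hUnonneg : ∀ y : E, y ≠ 0 → 0 ≤ U y) :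
    ∃ c > 0, ∀ᶠ t in atTop, c * t ≤ ‖x t‖ :=
  exists_pos_eventually_mul_le_norm_of_le_deriv_inner (by positivity : 0 < 2 * h) hx.hasDerivAt
    (fun t ht => hx.hasDerivAt_inner hU hU1 ht)
    (fun t ht => by nlinarith [hUnonneg _ (hx.ne_zero t ht)])

lemma exists_tendsto_deriv [FiniteDimensional ℝ E] (hx : IsKeplerOrbit U h t₀ x x')
    (hα : 0 < α) (hU : ∀ y : E, y ≠ 0 → ∀ c : ℝ, 0 < c → U (c • y) = c ^ (-α) * U y)
    (hU1 : ContDiffOn ℝ 1 U {y | y ≠ 0}) {c : ℝ} (hc : 0 < c)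
    (hesc : ∀ᶠ t in atTop, c * t ≤ ‖x t‖) : ∃ v, Tendsto x' atTop (𝓝 v) := by
  have hgrad := continuousOn_gradient_of_contDiffOn isOpen_ne hU1
  obtain ⟨C, hC0, hC⟩ := exists_norm_le_mul_rpow_of_homogeneous hgrad fun y hy c hc =>
    gradient_smul_of_homogeneous hU hy hc
      ((hU1.differentiableOn one_ne_zero).differentiableAt (isOpen_ne.mem_nhds hy))
  have hxc : ContinuousOn x (Ici t₀) := fun t ht =>
    (hx.hasDerivAt t ht).continuousAt.continuousWithinAt
  refine exists_tendsto_of_norm_hasDerivAt_le_rpow (γ := -α - 1) (K := C * c ^ (-α - 1))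
    (by linarith) hx.hasDerivAt_deriv (hgrad.comp hxc hx.ne_zero) ?_
  filter_upwards [hesc, eventually_gt_atTop 0, eventually_ge_atTop t₀] with t hct ht0 ht₀
  calc ‖∇ U (x t)‖ ≤ C * ‖x t‖ ^ (-α - 1) := hC _ (hx.ne_zero t ht₀)
    _ ≤ C * (c * t) ^ (-α - 1) :=
        mul_le_mul_of_nonneg_left (Real.rpow_le_rpow_of_nonpos (by positivity) hct (by linarith))
          hC0
    _ = C * c ^ (-α - 1) * t ^ (-α - 1) := by rw [Real.mul_rpow hc.le ht0.le, mul_assoc]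

lemma norm_eq_sqrt_of_tendsto_deriv [FiniteDimensional ℝ E] (hx : IsKeplerOrbit U h t₀ x x')
    (hα : 0 < α) (hU : ∀ y : E, y ≠ 0 → ∀ c : ℝ, 0 < c → U (c • y) = c ^ (-α) * U y)
    (hUc : ContinuousOn U {y | y ≠ 0}) (hr : Tendsto (‖x ·‖) atTop atTop) {v : E}
    (hv : Tendsto x' atTop (𝓝 v)) : ‖v‖ = √(2 * h) := by
  obtain ⟨C, -, hC⟩ := exists_norm_le_mul_rpow_of_homogeneous hUc fun y hy c hc => by
    rw [smul_eq_mul]; exact hU y hy c hc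
  have hUx : Tendsto (U ∘ x) atTop (𝓝 0) :=
    (tendsto_cobounded_zero_of_norm_le_mul_rpow (neg_lt_zero.2 hα) hC).comp
      (tendsto_norm_atTop_iff_cobounded.1 hr)
  have hspeed : Tendsto (fun t => ‖x' t‖ ^ 2) atTop (𝓝 (2 * (h + 0))) := by
    refine ((hUx.const_add h).const_mul 2).congr' ?_
    filter_upwards [eventually_ge_atTop t₀] with t ht
    rw [Function.comp_apply]
    linarith [hx.energy t ht]
  rw [add_zero] at hspeed
  rw [← tendsto_nhds_unique (hv.norm.pow 2) hspeed, Real.sqrt_sq (norm_nonneg v)]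

end IsKeplerOrbit

end Kepler

theorem limiting_direction_general {d : ℕ} (α h t₀ : ℝ)
    (hα : α ∈ Set.Ioo (0:ℝ) 2) (hh : 0 < h)
    (U : EuclideanSpace ℝ (Fin d) → ℝ)
    (hUhom : ∀ y : EuclideanSpace ℝ (Fin d), y ≠ 0 →
      U y = ‖y‖ ^ (-α) * U (‖y‖⁻¹ • y))
    (hUC2 : ContDiffOn ℝ 2 U {y : EuclideanSpace ℝ (Fin d) | y ≠ 0})
    (hUpos : ∀ y : EuclideanSpace ℝ (Fin d), ‖y‖ = 1 → 0 < U y)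
    (x x' : ℝ → EuclideanSpace ℝ (Fin d))
    (hx0 : ∀ t ∈ Set.Ici t₀, x t ≠ 0)
    (hx1 : ∀ t ∈ Set.Ici t₀, HasDerivAt x (x' t) t)
    (hx2 : ∀ t ∈ Set.Ici t₀, HasDerivAt x' (gradient U (x t)) t)
    (hE : ∀ t ∈ Set.Ici t₀, (1/2) * ‖x' t‖^2 - U (x t) = h) :
    ∃ sp : EuclideanSpace ℝ (Fin d), ‖sp‖ = 1 ∧
      Tendsto (fun t => ‖x t‖⁻¹ • x t) atTop (nhds sp) ∧
      Tendsto (fun t => t⁻¹ • x t) atTop (nhds (Real.sqrt (2*h) • sp)) := by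
  obtain ⟨hα0, hα2⟩ := hα
  have hx : IsKeplerOrbit U h t₀ x x' := ⟨hx0, hx1, hx2, hE⟩
  have hU1 : ContDiffOn ℝ 1 U {y | y ≠ 0} := hUC2.of_le one_le_two
  have hU : ∀ y, y ≠ 0 → ∀ c : ℝ, 0 < c → U (c • y) = c ^ (-α) * U y := fun _ hy _ hc =>
    apply_smul_of_homogeneous hUhom hy hc
  obtain ⟨c, hc, hesc⟩ := hx.exists_pos_eventually_mul_le_norm hα2.le hh hU hU1
    fun y hy => (pos_of_homogeneous hUhom hUpos hy).le
  obtain ⟨v, hv⟩ := hx.exists_tendsto_deriv hα0 hU hU1 hc hesc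
  have hr : Tendsto (‖x ·‖) atTop atTop :=
    tendsto_atTop_mono' atTop hesc (tendsto_id.const_mul_atTop hc)
  have hv_norm : ‖v‖ = √(2 * h) := hx.norm_eq_sqrt_of_tendsto_deriv hα0 hU hU1.continuousOn hr hv
  have hv0 : v ≠ 0 := norm_pos_iff.1 (hv_norm ▸ Real.sqrt_pos.2 (by positivity))
  have hxv := tendsto_inv_smul_of_tendsto_deriv hx1 hv
  refine ⟨‖v‖⁻¹ • v, norm_smul_inv_norm hv0, tendsto_norm_inv_smul_of_tendsto_inv_smul hv0 hxv, ?_⟩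
  rwa [← hv_norm, smul_inv_smul₀ (norm_ne_zero_iff.2 hv0)]

/-- A positive-energy solution of the anisotropic Kepler problem defined for
all `t ≥ t₀` has a limiting direction `s⁺` at infinity, and
`x(t)/t → √(2h) s⁺`. -/
theorem limiting_direction {d : ℕ} (hd : 2 ≤ d) (α h t₀ : ℝ)
    (hα : α ∈ Set.Ioo (0:ℝ) 2) (hh : 0 < h)
    (U : EuclideanSpace ℝ (Fin d) → ℝ)
    (hUhom : ∀ y : EuclideanSpace ℝ (Fin d), y ≠ 0 →
      U y = ‖y‖ ^ (-α) * U (‖y‖⁻¹ • y))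
    (hUC2 : ContDiffOn ℝ 2 U {y : EuclideanSpace ℝ (Fin d) | y ≠ 0})
    (hUpos : ∀ y : EuclideanSpace ℝ (Fin d), ‖y‖ = 1 → 0 < U y)
    (x x' : ℝ → EuclideanSpace ℝ (Fin d))
    (hx0 : ∀ t ∈ Set.Ici t₀, x t ≠ 0)
    (hx1 : ∀ t ∈ Set.Ici t₀, HasDerivAt x (x' t) t)
    (hx2 : ∀ t ∈ Set.Ici t₀, HasDerivAt x' (gradient U (x t)) t)
    (hE : ∀ t ∈ Set.Ici t₀, (1/2) * ‖x' t‖^2 - U (x t) = h) :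
    ∃ sp : EuclideanSpace ℝ (Fin d), ‖sp‖ = 1 ∧
      Tendsto (fun t => ‖x t‖⁻¹ • x t) atTop (nhds sp) ∧
      Tendsto (fun t => t⁻¹ • x t) atTop (nhds (Real.sqrt (2*h) • sp)) :=
  limiting_direction_general α h t₀ hα hh U hUhom hUC2 hUpos x x' hx0 hx1 hx2 hE
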